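/- arXiv:2012.10695 — 6 statements merged into one kernel-verified Lean document; each statement's English description precedes it below -/
import Mathlib

section
/- Let X be a nonempty set, let μ, σ : X → ℝ be functions with σ(x) > 0 for all x, and let β > 0. Suppose x₀ ∈ X satisfies μ(x) + β·σ(x) ≤ μ(x₀) + β·σ(x₀) for all x ∈ X (i.e., x₀ maximizes the UCB acquisition function), and set f⋆ = μ(x₀) + β·σ(x₀). Then x₀ maximizes the noiseless BES-MP criterion: for every x ∈ X, H_b(Φ((f⋆ − μ(x))/σ(x))) ≤ H_b(Φ((f⋆ − μ(x₀))/σ(x₀))). -/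
open MeasureTheory ProbabilityTheory Real

/-- The standard Gaussian cumulative distribution function `Φ`. -/
noncomputable def stdGaussianCDF (t : ℝ) : ℝ :=
  (gaussianReal 0 1 (Set.Iic t)).toReal

/-- The binary entropy function `H_b` (natural logarithm, with `0 · log 0 = 0`). -/
noncomputable def binEnt (p : ℝ) : ℝ :=
  - (p * Real.log p) - (1 - p) * Real.log (1 - p)

/-- Kullback–Leibler divergence between two measures. -/
noncomputable def klDiv {α : Type*} [MeasurableSpace α] (μ ν : Measure α) : ℝ :=
  ∫ x, Real.log (μ.rnDeriv ν x).toReal ∂μ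

/-- Mutual information between two random variables: the KL divergence between the joint law
and the product of the marginal laws. -/
noncomputable def mutualInfo {Ω α β : Type*} [MeasurableSpace Ω] [MeasurableSpace α]
    [MeasurableSpace β] (P : Measure Ω) (A : Ω → α) (B : Ω → β) : ℝ :=
  klDiv (P.map (fun ω => (A ω, B ω))) ((P.map A).prod (P.map B))


open scoped ENNReal NNReal

lemma binEnt_eq (p : ℝ) : binEnt p = Real.binEntropy p := by
  simp [binEnt, Real.binEntropy, Real.log_inv]; ring

lemma stdGaussianCDF_mono : Monotone stdGaussianCDF := by
  intro a b hab
  exact ENNReal.toReal_mono (measure_ne_top _ _)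
    (measure_mono (Set.Iic_subset_Iic.2 hab))

lemma stdGaussianCDF_le_one (t : ℝ) : stdGaussianCDF t ≤ 1 := by
  rw [stdGaussianCDF]
  have := prob_le_one (μ := gaussianReal 0 1) (s := Set.Iic t)
  simpa using ENNReal.toReal_mono (by simp) this

lemma stdGaussianCDF_zero : stdGaussianCDF 0 = 1 / 2 := by
  have h1 : (1 : ℝ≥0) ≠ 0 := one_ne_zero
  have hsym : (∫ x in Set.Ioi (0:ℝ), gaussianPDFReal 0 1 x)
      = ∫ x in Set.Iic (0:ℝ), gaussianPDFReal 0 1 x := by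
    have hev : ∀ x : ℝ, gaussianPDFReal 0 1 (-x) = gaussianPDFReal 0 1 x := by
      intro x; simp [gaussianPDFReal, neg_sq]
    calc (∫ x in Set.Ioi (0:ℝ), gaussianPDFReal 0 1 x)
        = ∫ x in Set.Ioi (0:ℝ), gaussianPDFReal 0 1 (-x) := by simp_rw [hev]
      _ = ∫ x in Set.Iic (-(0:ℝ)), gaussianPDFReal 0 1 x := integral_comp_neg_Ioi _ _
      _ = ∫ x in Set.Iic (0:ℝ), gaussianPDFReal 0 1 x := by rw [neg_zero]
  have heq : gaussianReal 0 1 (Set.Ioi 0) = gaussianReal 0 1 (Set.Iic 0) := by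
    rw [gaussianReal_apply_eq_integral _ h1, gaussianReal_apply_eq_integral _ h1, hsym]
  have hsum : gaussianReal 0 1 (Set.Iic 0) + gaussianReal 0 1 (Set.Ioi 0) = 1 := by
    rw [← measure_union (by simp [Set.disjoint_left]) measurableSet_Ioi]
    simp [Set.Iic_union_Ioi]
  rw [heq] at hsum
  have : gaussianReal 0 1 (Set.Iic 0) = 1/2 := by
    have h2 : (2 : ℝ≥0∞) * gaussianReal 0 1 (Set.Iic 0) = 1 := by
      rw [two_mul]; exact hsum
    rw [ENNReal.eq_div_iff (by norm_num) (by norm_num), mul_comm] at *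
    exact h2
  rw [stdGaussianCDF, this]
  simp [ENNReal.toReal_div]

/-- If `x₀` maximizes the UCB acquisition function `μ x + β σ x` and
`f⋆ = μ x₀ + β σ x₀`, then `x₀` maximizes the noiseless BES-MP criterion
`x ↦ H_b (Φ ((f⋆ - μ x) / σ x))`. -/
theorem ucb_maximizes_noiseless_besmp {X : Type*} [Nonempty X]
    (μ σ : X → ℝ) (hσ : ∀ x, 0 < σ x) (β : ℝ) (hβ : 0 < β) (x₀ : X)
    (hmax : ∀ x, μ x + β * σ x ≤ μ x₀ + β * σ x₀) :
    ∀ x, binEnt (stdGaussianCDF (((μ x₀ + β * σ x₀) - μ x) / σ x)) ≤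
      binEnt (stdGaussianCDF (((μ x₀ + β * σ x₀) - μ x₀) / σ x₀)) := by
  intro x
  have hσx := hσ x
  have hσ0 := hσ x₀
  have hx0 : ((μ x₀ + β * σ x₀) - μ x₀) / σ x₀ = β := by
    field_simp; ring
  have hx : β ≤ ((μ x₀ + β * σ x₀) - μ x) / σ x := by
    rw [le_div_iff₀ hσx]
    linarith [hmax x]
  rw [hx0, binEnt_eq, binEnt_eq]
  set p := stdGaussianCDF (((μ x₀ + β * σ x₀) - μ x) / σ x) with hp
  set q := stdGaussianCDF β with hq
  have hqp : q ≤ p := stdGaussianCDF_mono hx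
  have hhalf : (2:ℝ)⁻¹ ≤ q := by
    rw [hq, show (2:ℝ)⁻¹ = 1/2 by norm_num, ← stdGaussianCDF_zero]
    have := stdGaussianCDF_mono hβ.le
    simpa [one_div] using this
  have hmemq : q ∈ Set.Icc (2:ℝ)⁻¹ 1 := ⟨hhalf, stdGaussianCDF_le_one β⟩
  have hmemp : p ∈ Set.Icc (2:ℝ)⁻¹ 1 := ⟨le_trans hhalf hqp, stdGaussianCDF_le_one _⟩
  exact Real.binEntropy_strictAntiOn.antitoneOn hmemq hmemp hqp
end

section
/- Let X be a set, let μ, σ : X → ℝ be functions with σ(x) > 0 for all x, and let β > 0. Suppose x₀ ∈ X satisfies μ(x) + β·σ(x) ≤ μ(x₀) + β·σ(x₀) for all x ∈ X, and set f⋆ = μ(x₀) + β·σ(x₀). Then |f⋆ − μ(x₀)| / σ(x₀) = β, and consequently x₀ minimizes the map x ↦ |f⋆ − μ(x)| / σ(x) over X: for every x ∈ X, |f⋆ − μ(x₀)| / σ(x₀) ≤ |f⋆ − μ(x)| / σ(x). -/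
open MeasureTheory ProbabilityTheory Real

/-- With `f⋆ = μ x₀ + β σ x₀` the UCB value at a UCB-maximizing `x₀`,
we have `|f⋆ - μ x₀| / σ x₀ = β`, and `x₀` minimizes `x ↦ |f⋆ - μ x| / σ x`. -/
theorem ucb_minimizes_normalized_gap {X : Type*}
    (μ σ : X → ℝ) (hσ : ∀ x, 0 < σ x) (β : ℝ) (hβ : 0 < β) (x₀ : X)
    (hmax : ∀ x, μ x + β * σ x ≤ μ x₀ + β * σ x₀) :
    |(μ x₀ + β * σ x₀) - μ x₀| / σ x₀ = β ∧
      ∀ x, |(μ x₀ + β * σ x₀) - μ x₀| / σ x₀ ≤ |(μ x₀ + β * σ x₀) - μ x| / σ x := by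
  have h0 : |(μ x₀ + β * σ x₀) - μ x₀| / σ x₀ = β := by
    have : (μ x₀ + β * σ x₀) - μ x₀ = β * σ x₀ := by ring
    rw [this, abs_of_pos (mul_pos hβ (hσ x₀)), mul_div_assoc,
      div_self (hσ x₀).ne', mul_one]
  refine ⟨h0, fun x => ?_⟩
  rw [h0]
  have h1 : β * σ x ≤ (μ x₀ + β * σ x₀) - μ x := by linarith [hmax x]
  have h2 : |(μ x₀ + β * σ x₀) - μ x| = (μ x₀ + β * σ x₀) - μ x := by
    exact abs_of_pos (lt_of_lt_of_le (mul_pos hβ (hσ x)) h1)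
  rw [h2, le_div_iff₀ (hσ x)]
  linarith
end

section
/- On a probability space, let f and ε be independent real-valued random variables with f distributed as the Gaussian measure with mean μ and variance σ² (σ > 0) and ε distributed as the Gaussian with mean 0 and variance σ_n² (σ_n > 0), and let y = f + ε. Then for almost every v with respect to the law of y, the conditional distribution of f given y = v is the Gaussian measure on ℝ with mean (σ²·v + σ_n²·μ)/(σ² + σ_n²) and variance σ²·σ_n²/(σ² + σ_n²). -/
open MeasureTheory ProbabilityTheory Real

lemma gaussianPDFReal_mul_key (μ a b x v : ℝ) (ha : 0 < a) (hb : 0 < b) :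
    gaussianPDFReal μ a.toNNReal x * gaussianPDFReal x b.toNNReal v =
      gaussianPDFReal μ (a + b).toNNReal v *
        gaussianPDFReal ((a * v + b * μ) / (a + b)) (a * b / (a + b)).toNNReal x := by
  have hT : 0 < a + b := by linarith
  have hc : 0 < a * b / (a + b) := by positivity
  simp only [gaussianPDFReal]
  rw [Real.coe_toNNReal _ ha.le, Real.coe_toNNReal _ hb.le, Real.coe_toNNReal _ hT.le,
    Real.coe_toNNReal _ hc.le]
  have hπ := Real.pi_pos
  rw [mul_mul_mul_comm, mul_mul_mul_comm ((√(2 * π * (a + b)))⁻¹)]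
  congr 1
  · rw [← mul_inv, ← mul_inv, ← Real.sqrt_mul (by positivity), ← Real.sqrt_mul (by positivity)]
    congr 1
    field_simp
  · rw [← Real.exp_add, ← Real.exp_add]
    congr 1
    field_simp
    ring

lemma measurable_gauss_fam (a b μ : ℝ) :
    Measurable (fun v : ℝ => gaussianReal ((a * v + b * μ) / (a + b)) (a * b / (a + b)).toNNReal) := by
  set c := (a * b / (a + b)).toNNReal with hc
  have hm : Measurable fun v : ℝ => (a * v + b * μ) / (a + b) := by fun_prop
  by_cases h : c = 0
  · simp only [h, gaussianReal_zero_var]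
    exact Measure.measurable_dirac.comp hm
  · apply Measure.measurable_of_measurable_coe
    intro s hs
    simp_rw [gaussianReal_apply _ h]
    have hjoint : Measurable fun p : ℝ × ℝ =>
        gaussianPDF ((a * p.1 + b * μ) / (a + b)) c p.2 := by
      unfold gaussianPDF gaussianPDFReal
      fun_prop
    exact hjoint.lintegral_prod_right'

noncomputable def gaussKer (a b μ : ℝ) : ProbabilityTheory.Kernel ℝ ℝ :=
  { toFun := fun v => gaussianReal ((a * v + b * μ) / (a + b)) (a * b / (a + b)).toNNReal
    measurable' := measurable_gauss_fam a b μ }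

instance (a b μ : ℝ) : IsMarkovKernel (gaussKer a b μ) :=
  ⟨fun _ => inferInstanceAs (IsProbabilityMeasure (gaussianReal _ _))⟩

lemma gaussKer_apply (a b μ : ℝ) (v : ℝ) :
    gaussKer a b μ v = gaussianReal ((a * v + b * μ) / (a + b)) (a * b / (a + b)).toNNReal := rfl

lemma joint_gauss_eq (μ a b : ℝ) (ha : 0 < a) (hb : 0 < b) :
    ((gaussianReal μ a.toNNReal).prod (gaussianReal 0 b.toNNReal)).map
        (fun p : ℝ × ℝ => (p.1 + p.2, p.1)) =
      (gaussianReal μ (a + b).toNNReal) ⊗ₘ gaussKer a b μ := by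
  have hT : 0 < a + b := by linarith
  have hc : 0 < a * b / (a + b) := by positivity
  have ha' : a.toNNReal ≠ 0 := (Real.toNNReal_pos.mpr ha).ne'
  have hb' : b.toNNReal ≠ 0 := (Real.toNNReal_pos.mpr hb).ne'
  have hT' : (a + b).toNNReal ≠ 0 := (Real.toNNReal_pos.mpr hT).ne'
  have hc' : (a * b / (a + b)).toNNReal ≠ 0 := (Real.toNNReal_pos.mpr hc).ne'
  have hTmeas : Measurable (fun p : ℝ × ℝ => (p.1 + p.2, p.1)) := by fun_prop
  haveI : IsProbabilityMeasure (((gaussianReal μ a.toNNReal).prod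
      (gaussianReal 0 b.toNNReal)).map (fun p : ℝ × ℝ => (p.1 + p.2, p.1))) :=
    Measure.isProbabilityMeasure_map hTmeas.aemeasurable
  refine MeasureTheory.ext_of_generate_finite _ generateFrom_prod.symm isPiSystem_prod ?_ ?_
  swap
  · simp [measure_univ]
  rintro _ ⟨s1, h1, s2, h2, rfl⟩
  simp only [Set.mem_setOf_eq] at h1 h2
  -- joint measurability of pdf families
  have hjb : Measurable fun p : ℝ × ℝ => gaussianPDF p.1 b.toNNReal p.2 := by
    unfold gaussianPDF gaussianPDFReal; fun_prop
  have hjc : Measurable fun p : ℝ × ℝ =>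
      gaussianPDF ((a * p.1 + b * μ) / (a + b)) (a * b / (a + b)).toNNReal p.2 := by
    unfold gaussianPDF gaussianPDFReal; fun_prop
  have hFmeas : Measurable fun x : ℝ => ∫⁻ v in s1, gaussianPDF x b.toNNReal v :=
    hjb.lintegral_prod_right'
  have hGmeas : Measurable fun v : ℝ =>
      ∫⁻ x in s2, gaussianPDF ((a * v + b * μ) / (a + b)) (a * b / (a + b)).toNNReal x :=
    hjc.lintegral_prod_right'
  -- LHS
  have hpre : MeasurableSet ((fun p : ℝ × ℝ => (p.1 + p.2, p.1)) ⁻¹' (s1 ×ˢ s2)) :=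
    hTmeas (h1.prod h2)
  rw [Measure.map_apply hTmeas (h1.prod h2), Measure.prod_apply hpre,
    Measure.compProd_apply_prod h1 h2]
  have key1 : ∀ x : ℝ, (gaussianReal 0 b.toNNReal)
      (Prod.mk x ⁻¹' ((fun p : ℝ × ℝ => (p.1 + p.2, p.1)) ⁻¹' (s1 ×ˢ s2))) =
      s2.indicator (fun x => ∫⁻ v in s1, gaussianPDF x b.toNNReal v) x := by
    intro x
    have hset : (Prod.mk x ⁻¹' ((fun p : ℝ × ℝ => (p.1 + p.2, p.1)) ⁻¹' (s1 ×ˢ s2))) =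
        {e : ℝ | x + e ∈ s1 ∧ x ∈ s2} := by
      ext e; simp [Set.mem_prod]
    rw [hset]
    by_cases hx : x ∈ s2
    · simp only [hx, and_true, Set.indicator_of_mem]
      have : {e : ℝ | x + e ∈ s1} = (fun e => x + e) ⁻¹' s1 := rfl
      rw [this, ← Measure.map_apply (measurable_const_add x) h1]
      rw [show (fun e => x + e) = (x + ·) from rfl, gaussianReal_map_const_add, zero_add,
        gaussianReal_apply _ hb']
      
    · simp [hx]
  calc ∫⁻ x, (gaussianReal 0 b.toNNReal)
        (Prod.mk x ⁻¹' ((fun p : ℝ × ℝ => (p.1 + p.2, p.1)) ⁻¹' (s1 ×ˢ s2)))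
        ∂(gaussianReal μ a.toNNReal)
      = ∫⁻ x in s2, (∫⁻ v in s1, gaussianPDF x b.toNNReal v)
          ∂(gaussianReal μ a.toNNReal) := by
        simp_rw [key1]
        rw [lintegral_indicator h2]
    _ = ∫⁻ x in s2, gaussianPDF μ a.toNNReal x * ∫⁻ v in s1, gaussianPDF x b.toNNReal v := by
        rw [gaussianReal_of_var_ne_zero _ ha', restrict_withDensity h2,
          lintegral_withDensity_eq_lintegral_mul _ (measurable_gaussianPDF _ _) hFmeas]
        rfl
    _ = ∫⁻ x in s2, (∫⁻ v in s1, gaussianPDF μ a.toNNReal x * gaussianPDF x b.toNNReal v) := by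
        refine lintegral_congr fun x => ?_
        rw [lintegral_const_mul _ (measurable_gaussianPDF _ _)]
    _ = ∫⁻ v in s1, (∫⁻ x in s2, gaussianPDF μ a.toNNReal x * gaussianPDF x b.toNNReal v) := by
        refine lintegral_lintegral_swap ?_
        apply Measurable.aemeasurable
        exact (((measurable_gaussianPDF μ a.toNNReal).comp measurable_fst).mul hjb)
    _ = ∫⁻ v in s1, (∫⁻ x in s2, gaussianPDF μ (a + b).toNNReal v *
          gaussianPDF ((a * v + b * μ) / (a + b)) (a * b / (a + b)).toNNReal x) := by
        refine lintegral_congr fun v => lintegral_congr fun x => ?_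
        simp only [gaussianPDF]
        rw [← ENNReal.ofReal_mul (gaussianPDFReal_nonneg _ _ _),
          ← ENNReal.ofReal_mul (gaussianPDFReal_nonneg _ _ _),
          gaussianPDFReal_mul_key μ a b x v ha hb]
    _ = ∫⁻ v in s1, gaussianPDF μ (a + b).toNNReal v *
          ∫⁻ x in s2, gaussianPDF ((a * v + b * μ) / (a + b)) (a * b / (a + b)).toNNReal x := by
        refine lintegral_congr fun v => ?_
        rw [lintegral_const_mul _ (measurable_gaussianPDF _ _)]
    _ = ∫⁻ v in s1, (gaussKer a b μ) v s2 ∂(gaussianReal μ (a + b).toNNReal) := by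
        simp_rw [gaussKer_apply, gaussianReal_apply _ hc']
        rw [gaussianReal_of_var_ne_zero _ hT', restrict_withDensity h1,
          lintegral_withDensity_eq_lintegral_mul _ (measurable_gaussianPDF _ _) hGmeas]
        rfl

/-- For independent `f ~ N(μ, σ²)` and `ε ~ N(0, σ_n²)` and `y = f + ε`,
the conditional distribution of `f` given `y = v` is, for almost every `v` w.r.t. the
law of `y`, the Gaussian with mean `(σ²v + σ_n²μ)/(σ² + σ_n²)` and variance
`σ²σ_n²/(σ² + σ_n²)`. -/
theorem condDistrib_gaussian_noisy_obs {Ω : Type*} [MeasurableSpace Ω]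
    (P : Measure Ω) [IsProbabilityMeasure P]
    (f ε : Ω → ℝ) (hf : Measurable f) (hε : Measurable ε)
    (hindep : IndepFun f ε P) (μ σ σn : ℝ) (hσ : 0 < σ) (hσn : 0 < σn)
    (hfl : P.map f = gaussianReal μ (Real.toNNReal (σ ^ 2)))
    (hεl : P.map ε = gaussianReal 0 (Real.toNNReal (σn ^ 2))) :
    ∀ᵐ v ∂(P.map (f + ε)),
      condDistrib f (f + ε) P v =
        gaussianReal ((σ ^ 2 * v + σn ^ 2 * μ) / (σ ^ 2 + σn ^ 2))
          (Real.toNNReal (σ ^ 2 * σn ^ 2 / (σ ^ 2 + σn ^ 2))) := by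
  have ha : 0 < σ ^ 2 := by positivity
  have hb : 0 < σn ^ 2 := by positivity
  have hX : Measurable (f + ε) := hf.add hε
  have hmap_pair : P.map (fun ω => (f ω, ε ω)) = (P.map f).prod (P.map ε) :=
    (indepFun_iff_map_prod_eq_prod_map_map hf.aemeasurable hε.aemeasurable).mp hindep
  have hjoint : P.map (fun ω => ((f + ε) ω, f ω)) =
      (gaussianReal μ (σ ^ 2 + σn ^ 2).toNNReal) ⊗ₘ gaussKer (σ ^ 2) (σn ^ 2) μ := by
    have hcomp : (fun ω => ((f + ε) ω, f ω)) =
        (fun p : ℝ × ℝ => (p.1 + p.2, p.1)) ∘ (fun ω => (f ω, ε ω)) := rfl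
    rw [hcomp, ← Measure.map_map (by fun_prop) (hf.prodMk hε), hmap_pair, hfl, hεl,
      joint_gauss_eq μ (σ ^ 2) (σn ^ 2) ha hb]
  have hmapX : P.map (f + ε) = gaussianReal μ (σ ^ 2 + σn ^ 2).toNNReal := by
    have h1 : (P.map (fun ω => ((f + ε) ω, f ω))).fst = P.map (f + ε) :=
      Measure.fst_map_prodMk hf
    rw [← h1, hjoint, Measure.fst_compProd]
  have h := condDistrib_ae_eq_of_measure_eq_compProd_of_measurable (μ := P) hX hf
    (κ := gaussKer (σ ^ 2) (σn ^ 2) μ) (by rw [hmapX]; exact hjoint)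
  filter_upwards [h] with v hv
  rw [hv, gaussKer_apply]
end

section
/- On a probability space, let f and ε be independent real-valued random variables with f distributed as the Gaussian measure with mean μ and variance σ² (σ > 0) and ε distributed as the Gaussian with mean 0 and variance σ_n² (σ_n > 0), let y = f + ε, and fix a threshold f∘ ∈ ℝ. Then for almost every v with respect to the law of y, the conditional probability that f < f∘ given y = v equals Φ(g(v, f∘)), where g(v, c) = ((σ² + σ_n²)·c − σ_n²·μ − σ²·v)/(σ·σ_n·√(σ² + σ_n²)). -/
open MeasureTheory ProbabilityTheory Real

open scoped NNReal ENNReal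

lemma keyPDF (μ σ σn : ℝ) (hσ : 0 < σ) (hσn : 0 < σn) (a v : ℝ) :
    gaussianPDFReal μ (Real.toNNReal (σ ^ 2)) a * gaussianPDFReal a (Real.toNNReal (σn ^ 2)) v =
      gaussianPDFReal μ (Real.toNNReal (σ ^ 2) + Real.toNNReal (σn ^ 2)) v *
        gaussianPDFReal ((σn ^ 2 * μ + σ ^ 2 * v) / (σ ^ 2 + σn ^ 2))
          (Real.toNNReal (σ ^ 2 * σn ^ 2 / (σ ^ 2 + σn ^ 2))) a := by
  have h1 : ((Real.toNNReal (σ ^ 2) : ℝ≥0) : ℝ) = σ ^ 2 := Real.coe_toNNReal _ (sq_nonneg σ)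
  have h2 : ((Real.toNNReal (σn ^ 2) : ℝ≥0) : ℝ) = σn ^ 2 := Real.coe_toNNReal _ (sq_nonneg σn)
  have hsum : (0:ℝ) < σ ^ 2 + σn ^ 2 := by positivity
  have h3 : ((Real.toNNReal (σ ^ 2 * σn ^ 2 / (σ ^ 2 + σn ^ 2)) : ℝ≥0) : ℝ)
      = σ ^ 2 * σn ^ 2 / (σ ^ 2 + σn ^ 2) := Real.coe_toNNReal _ (by positivity)
  unfold gaussianPDFReal
  rw [NNReal.coe_add, h1, h2, h3]
  have hπ : (0:ℝ) < π := Real.pi_pos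
  have hs2 : (0:ℝ) < σ ^ 2 := by positivity
  have hsn2 : (0:ℝ) < σn ^ 2 := by positivity
  have hw : (0:ℝ) < σ ^ 2 * σn ^ 2 / (σ ^ 2 + σn ^ 2) := by positivity
  rw [mul_mul_mul_comm, mul_mul_mul_comm ((√(2 * π * (σ ^ 2 + σn ^ 2)))⁻¹),
    ← mul_inv, ← mul_inv, ← Real.sqrt_mul (by positivity), ← Real.sqrt_mul (by positivity),
    ← Real.exp_add, ← Real.exp_add]
  congr 2
  · congr 1
    field_simp
  · field_simp
    ring

lemma measurable_gaussianPDF_pair (V : ℝ≥0) :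
    Measurable (fun p : ℝ × ℝ => gaussianPDF p.1 V p.2) := by
  unfold gaussianPDF gaussianPDFReal
  fun_prop

lemma measurable_gaussianReal_mean {V : ℝ≥0} (hV : V ≠ 0) {s : Set ℝ} (hs : MeasurableSet s) :
    Measurable (fun a : ℝ => gaussianReal a V s) := by
  simp_rw [gaussianReal_apply _ hV]
  exact Measurable.lintegral_prod_right' (measurable_gaussianPDF_pair V)

lemma gaussianReal_Iio (m : ℝ) (s₀ : ℝ) (hs₀ : 0 < s₀) (c : ℝ) :
    gaussianReal m (Real.toNNReal (s₀ ^ 2)) (Set.Iio c)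
      = gaussianReal 0 1 (Set.Iic ((c - m) / s₀)) := by
  have hV : (Real.toNNReal (s₀ ^ 2)) ≠ 0 := by
    simp [Real.toNNReal_eq_zero, not_le]; positivity
  have h1 : (gaussianReal 0 1).map (fun x => s₀ * x) = gaussianReal 0 (Real.toNNReal (s₀ ^ 2)) := by
    rw [show (fun x => s₀ * x) = (s₀ * ·) from rfl, gaussianReal_map_const_mul]
    congr 1
    · ring
    · ext
      simp [Real.coe_toNNReal _ (sq_nonneg s₀)]
  have h2 : ((gaussianReal 0 (Real.toNNReal (s₀ ^ 2))).map (· + m)) = gaussianReal m (Real.toNNReal (s₀ ^ 2)) := by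
    rw [gaussianReal_map_add_const, zero_add]
  rw [← h2, ← h1, Measure.map_map (by fun_prop) (by fun_prop),
    Measure.map_apply (by fun_prop) measurableSet_Iio]
  have hpre : ((fun x => x + m) ∘ fun x => s₀ * x) ⁻¹' Set.Iio c = Set.Iio ((c - m) / s₀) := by
    ext x
    simp only [Set.mem_preimage, Function.comp_apply, Set.mem_Iio]
    rw [lt_div_iff₀ hs₀]
    constructor <;> intro h <;> nlinarith
  rw [hpre]
  refine measure_congr ?_
  have : (gaussianReal 0 1 : Measure ℝ) {((c - m) / s₀)} = 0 :=
    gaussianReal_absolutelyContinuous 0 one_ne_zero (measure_singleton _)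
  exact MeasureTheory.Iio_ae_eq_Iic' this

set_option maxHeartbeats 1000000 in
/-- For independent `f ~ N(μ, σ²)` and `ε ~ N(0, σ_n²)`, `y = f + ε` and a
threshold `f∘`, for almost every `v` w.r.t. the law of `y`, the conditional probability
that `f < f∘` given `y = v` equals `Φ(g(v, f∘))` where
`g(v, c) = ((σ² + σ_n²)c - σ_n²μ - σ²v)/(σ σ_n √(σ² + σ_n²))`. -/
theorem condProb_sublevel_given_noisy_obs {Ω : Type*} [MeasurableSpace Ω]
    (P : Measure Ω) [IsProbabilityMeasure P]
    (f ε : Ω → ℝ) (hf : Measurable f) (hε : Measurable ε)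
    (hindep : IndepFun f ε P) (μ σ σn : ℝ) (hσ : 0 < σ) (hσn : 0 < σn)
    (hfl : P.map f = gaussianReal μ (Real.toNNReal (σ ^ 2)))
    (hεl : P.map ε = gaussianReal 0 (Real.toNNReal (σn ^ 2)))
    (f₀ : ℝ) :
    ∀ᵐ v ∂(P.map (f + ε)),
      (condDistrib f (f + ε) P v (Set.Iio f₀)).toReal =
        stdGaussianCDF (((σ ^ 2 + σn ^ 2) * f₀ - σn ^ 2 * μ - σ ^ 2 * v) /
          (σ * σn * Real.sqrt (σ ^ 2 + σn ^ 2))) := by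
  have hsum : (0:ℝ) < σ ^ 2 + σn ^ 2 := by positivity
  have hfε : Measurable (f + ε) := hf.add hε
  have hV1 : Real.toNNReal (σ ^ 2) ≠ 0 := by
    simp only [ne_eq, Real.toNNReal_eq_zero, not_le]; positivity
  have hV2 : Real.toNNReal (σn ^ 2) ≠ 0 := by
    simp only [ne_eq, Real.toNNReal_eq_zero, not_le]; positivity
  have hV12 : Real.toNNReal (σ ^ 2) + Real.toNNReal (σn ^ 2) ≠ 0 := by
    simp only [ne_eq, add_eq_zero, not_and]
    intro; exact hV2
  have hW : Real.toNNReal (σ ^ 2 * σn ^ 2 / (σ ^ 2 + σn ^ 2)) ≠ 0 := by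
    simp only [ne_eq, Real.toNNReal_eq_zero, not_le]; positivity
  set m : ℝ → ℝ := fun v => (σn ^ 2 * μ + σ ^ 2 * v) / (σ ^ 2 + σn ^ 2) with hm_def
  have hm : Measurable m := by fun_prop
  have hg : Measurable (fun p : ℝ × ℝ => m p.1 + p.2) :=
    (hm.comp measurable_fst).add measurable_snd
  set κ : Kernel ℝ ℝ :=
    Kernel.map (Kernel.id ×ₖ Kernel.const ℝ
      (gaussianReal 0 (Real.toNNReal (σ ^ 2 * σn ^ 2 / (σ ^ 2 + σn ^ 2)))))
      (fun p : ℝ × ℝ => m p.1 + p.2) with hκ_def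
  have hκa : ∀ v : ℝ, κ v = gaussianReal (m v) (Real.toNNReal (σ ^ 2 * σn ^ 2 / (σ ^ 2 + σn ^ 2))) := by
    intro v
    rw [hκ_def, Kernel.map_apply _ hg, Kernel.prod_apply, Kernel.id_apply, Kernel.const_apply,
      Measure.dirac_prod, Measure.map_map hg measurable_prodMk_left]
    have hco : (fun p : ℝ × ℝ => m p.1 + p.2) ∘ Prod.mk v = (m v + ·) := rfl
    rw [hco, gaussianReal_map_const_add, zero_add]
  haveI : IsMarkovKernel κ := ⟨fun v => by rw [hκa v]; infer_instance⟩
  have hpair : P.map (fun ω => (f ω, ε ω)) =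
      (gaussianReal μ (Real.toNNReal (σ ^ 2))).prod (gaussianReal 0 (Real.toNNReal (σn ^ 2))) := by
    rw [← hfl, ← hεl]
    exact (indepFun_iff_map_prod_eq_prod_map_map hf.aemeasurable hε.aemeasurable).mp hindep
  set T : ℝ × ℝ → ℝ × ℝ := fun p => (p.1 + p.2, p.1) with hT_def
  have hT : Measurable T := by fun_prop
  have hmap2 : P.map (fun ω => ((f + ε) ω, f ω)) =
      ((gaussianReal μ (Real.toNNReal (σ ^ 2))).prod
        (gaussianReal 0 (Real.toNNReal (σn ^ 2)))).map T := by
    rw [← hpair, Measure.map_map hT (hf.prodMk hε)]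
    rfl
  have hLR : ∀ s t : Set ℝ, MeasurableSet s → MeasurableSet t →
      (((gaussianReal μ (Real.toNNReal (σ ^ 2))).prod
        (gaussianReal 0 (Real.toNNReal (σn ^ 2)))).map T) (s ×ˢ t)
        = ∫⁻ v in s, gaussianPDF μ (Real.toNNReal (σ ^ 2) + Real.toNNReal (σn ^ 2)) v *
            gaussianReal (m v) (Real.toNNReal (σ ^ 2 * σn ^ 2 / (σ ^ 2 + σn ^ 2))) t := by
    intro s t hs ht
    rw [Measure.map_apply hT (hs.prod ht), Measure.prod_apply (hT (hs.prod ht))]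
    have hint : (fun a : ℝ => gaussianReal 0 (Real.toNNReal (σn ^ 2))
        (Prod.mk a ⁻¹' (T ⁻¹' (s ×ˢ t))))
        = t.indicator (fun a => gaussianReal a (Real.toNNReal (σn ^ 2)) s) := by
      funext a
      by_cases hat : a ∈ t
      · rw [Set.indicator_of_mem hat]
        have hpre : Prod.mk a ⁻¹' (T ⁻¹' (s ×ˢ t)) = (fun b => a + b) ⁻¹' s := by
          ext b; simp [hT_def, hat]
        rw [hpre, ← Measure.map_apply (measurable_const_add a) hs]
        have : (fun b : ℝ => a + b) = (a + ·) := rfl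
        rw [this, gaussianReal_map_const_add, zero_add]
      · rw [Set.indicator_of_notMem hat]
        have hpre : Prod.mk a ⁻¹' (T ⁻¹' (s ×ˢ t)) = ∅ := by
          ext b; simp [hT_def, hat]
        simp [hpre]
    rw [hint, lintegral_indicator ht]
    rw [gaussianReal_of_var_ne_zero μ hV1, restrict_withDensity ht,
      lintegral_withDensity_eq_lintegral_mul _ (measurable_gaussianPDF μ _)
        (measurable_gaussianReal_mean hV2 hs)]
    calc ∫⁻ a in t, (gaussianPDF μ (Real.toNNReal (σ ^ 2)) *
            fun a => gaussianReal a (Real.toNNReal (σn ^ 2)) s) a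
        = ∫⁻ a in t, ∫⁻ v in s, gaussianPDF μ (Real.toNNReal (σ ^ 2)) a *
            gaussianPDF a (Real.toNNReal (σn ^ 2)) v := by
          refine lintegral_congr fun a => ?_
          simp only [Pi.mul_apply]
          rw [gaussianReal_apply _ hV2, ← lintegral_const_mul _ (measurable_gaussianPDF a _)]
      _ = ∫⁻ a in t, ∫⁻ v in s,
            gaussianPDF μ (Real.toNNReal (σ ^ 2) + Real.toNNReal (σn ^ 2)) v *
            gaussianPDF (m v) (Real.toNNReal (σ ^ 2 * σn ^ 2 / (σ ^ 2 + σn ^ 2))) a := by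
          refine lintegral_congr fun a => lintegral_congr fun v => ?_
          rw [gaussianPDF, gaussianPDF, ← ENNReal.ofReal_mul (gaussianPDFReal_nonneg _ _ _),
            keyPDF μ σ σn hσ hσn a v,
            ENNReal.ofReal_mul (gaussianPDFReal_nonneg _ _ _)]
          rfl
      _ = ∫⁻ v in s, ∫⁻ a in t,
            gaussianPDF μ (Real.toNNReal (σ ^ 2) + Real.toNNReal (σn ^ 2)) v *
            gaussianPDF (m v) (Real.toNNReal (σ ^ 2 * σn ^ 2 / (σ ^ 2 + σn ^ 2))) a := by
          have hmeas : Measurable (Function.uncurry (fun (a v : ℝ) =>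
              gaussianPDF μ (Real.toNNReal (σ ^ 2) + Real.toNNReal (σn ^ 2)) v *
              gaussianPDF (m v) (Real.toNNReal (σ ^ 2 * σn ^ 2 / (σ ^ 2 + σn ^ 2))) a)) := by
            unfold Function.uncurry gaussianPDF gaussianPDFReal
            fun_prop
          exact lintegral_lintegral_swap hmeas.aemeasurable
      _ = ∫⁻ v in s, gaussianPDF μ (Real.toNNReal (σ ^ 2) + Real.toNNReal (σn ^ 2)) v *
            gaussianReal (m v) (Real.toNNReal (σ ^ 2 * σn ^ 2 / (σ ^ 2 + σn ^ 2))) t := by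
          refine lintegral_congr fun v => ?_
          rw [gaussianReal_apply _ hW, lintegral_const_mul _ (measurable_gaussianPDF _ _)]
  have hY : P.map (f + ε) = gaussianReal μ (Real.toNNReal (σ ^ 2) + Real.toNNReal (σn ^ 2)) := by
    ext s hs
    rw [Measure.map_apply (hfε) hs]
    have hpre : (f + ε) ⁻¹' s = (fun ω => ((f + ε) ω, f ω)) ⁻¹' (s ×ˢ Set.univ) := by
      ext ω; simp
    rw [hpre, ← Measure.map_apply ((hfε).prodMk hf) (hs.prod MeasurableSet.univ),
      hmap2, hLR s Set.univ hs MeasurableSet.univ]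
    simp only [measure_univ, mul_one]
    rw [← gaussianReal_apply μ hV12 s]
  haveI : IsProbabilityMeasure (P.map (fun ω => ((f + ε) ω, f ω))) :=
    Measure.isProbabilityMeasure_map ((hfε).prodMk hf).aemeasurable
  haveI : IsProbabilityMeasure (P.map (f + ε)) :=
    Measure.isProbabilityMeasure_map (hfε).aemeasurable
  have hcomp : P.map (fun ω => ((f + ε) ω, f ω)) = (P.map (f + ε)) ⊗ₘ κ := by
    refine ext_of_generate_finite _ generateFrom_prod.symm isPiSystem_prod ?_ ?_
    · rintro _ ⟨s, hs, t, ht, rfl⟩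
      simp only [Set.mem_setOf_eq] at hs ht
      rw [hmap2, hLR s t hs ht, Measure.compProd_apply_prod hs ht, hY,
        gaussianReal_of_var_ne_zero μ hV12, restrict_withDensity hs,
        lintegral_withDensity_eq_lintegral_mul _ (measurable_gaussianPDF _ _)
          (Kernel.measurable_coe κ ht)]
      refine lintegral_congr fun v => ?_
      simp only [Pi.mul_apply]
      rw [hκa v]
    · rw [Measure.compProd_apply_univ]
      simp
  have hae := condDistrib_ae_eq_of_measure_eq_compProd_of_measurable (μ := P) (hfε) hf (κ := κ) hcomp
  filter_upwards [hae] with v hv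
  rw [hv, hκa v]
  have hs₀ : (0:ℝ) < σ * σn / √(σ ^ 2 + σn ^ 2) := by positivity
  have hWeq : Real.toNNReal (σ ^ 2 * σn ^ 2 / (σ ^ 2 + σn ^ 2))
      = Real.toNNReal ((σ * σn / √(σ ^ 2 + σn ^ 2)) ^ 2) := by
    congr 1
    rw [div_pow, Real.sq_sqrt hsum.le]
    ring
  rw [hWeq, gaussianReal_Iio _ _ hs₀]
  have harg : (f₀ - m v) / (σ * σn / √(σ ^ 2 + σn ^ 2))
      = ((σ ^ 2 + σn ^ 2) * f₀ - σn ^ 2 * μ - σ ^ 2 * v) / (σ * σn * √(σ ^ 2 + σn ^ 2)) := by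
    have hu : √(σ ^ 2 + σn ^ 2) ^ 2 = σ ^ 2 + σn ^ 2 := Real.sq_sqrt hsum.le
    have hu0 : √(σ ^ 2 + σn ^ 2) ≠ 0 := by positivity
    rw [hm_def]
    field_simp
    linear_combination (f₀ * (σ ^ 2 + σn ^ 2) - (σn ^ 2 * μ + σ ^ 2 * v)) * hu
  rw [harg, stdGaussianCDF]
end

section
/- On a probability space, let f and ε be independent real-valued random variables with f distributed as the Gaussian measure with mean μ and variance σ² (σ > 0) and ε distributed as the Gaussian with mean 0 and variance σ_n² (σ_n > 0), let y = f + ε, and fix t ∈ ℝ. Then the conditional law of y given the event {f ≤ t} is absolutely continuous with respect to Lebesgue measure, with density v ↦ Φ(g(v, t)) · pdf(μ, σ² + σ_n²)(v) / Φ((t − μ)/σ), where g(v, c) = ((σ² + σ_n²)·c − σ_n²·μ − σ²·v)/(σ·σ_n·√(σ² + σ_n²)). -/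
open MeasureTheory ProbabilityTheory Real

lemma gaussianReal_Iic (m V : ℝ) (hV : 0 < V) (t : ℝ) :
    gaussianReal m (Real.toNNReal V) (Set.Iic t)
      = ENNReal.ofReal (stdGaussianCDF ((t - m) / Real.sqrt V)) := by
  set s : ℝ := Real.sqrt V with hs
  have hs0 : 0 < s := Real.sqrt_pos.mpr hV
  have hVs : V = s ^ 2 := (Real.sq_sqrt hV.le).symm
  have h1 : (gaussianReal 0 1).map (fun x => s * x) = gaussianReal 0 (Real.toNNReal V) := by
    rw [show (fun x => s * x) = (s * ·) from rfl, gaussianReal_map_const_mul]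
    congr 1
    · ring
    · ext
      simp only [NNReal.coe_mul, NNReal.coe_mk, NNReal.coe_one, mul_one,
        Real.coe_toNNReal _ hV.le]
      exact hVs.symm
  have h2 : (gaussianReal 0 (Real.toNNReal V)).map (· + m)
      = gaussianReal m (Real.toNNReal V) := by
    rw [gaussianReal_map_add_const]; rw [zero_add]
  have h3 : gaussianReal m (Real.toNNReal V)
      = (gaussianReal 0 1).map (fun x => s * x + m) := by
    rw [← h2, ← h1, Measure.map_map (measurable_add_const m) (measurable_const_mul s)]
    rfl
  rw [h3, Measure.map_apply ((measurable_const_mul s).add_const m) measurableSet_Iic]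
  have hpre : (fun x => s * x + m) ⁻¹' Set.Iic t = Set.Iic ((t - m) / s) := by
    ext x
    simp only [Set.mem_preimage, Set.mem_Iic]
    rw [le_div_iff₀ hs0]
    constructor <;> intro h <;> nlinarith
  rw [hpre, stdGaussianCDF, ENNReal.ofReal_toReal (measure_ne_top _ _)]

lemma stdGaussianCDF_pos (u : ℝ) : 0 < stdGaussianCDF u := by
  rw [stdGaussianCDF]
  refine ENNReal.toReal_pos ?_ (measure_ne_top _ _)
  intro h
  have := (gaussianReal_absolutelyContinuous' 0 one_ne_zero) h
  simp [Real.volume_Iic] at this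

lemma gaussianPDFReal_conv (μ a b : ℝ) (ha : 0 < a) (hb : 0 < b) (v x : ℝ) :
    gaussianPDFReal μ (Real.toNNReal a) x * gaussianPDFReal 0 (Real.toNNReal b) (v - x)
      = gaussianPDFReal μ (Real.toNNReal (a + b)) v *
        gaussianPDFReal ((b * μ + a * v) / (a + b)) (Real.toNNReal (a * b / (a + b))) x := by
  have hab : 0 < a + b := by linarith
  have habd : 0 < a * b / (a + b) := by positivity
  simp only [gaussianPDFReal, Real.coe_toNNReal _ ha.le, Real.coe_toNNReal _ hb.le,
    Real.coe_toNNReal _ hab.le, Real.coe_toNNReal _ habd.le]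
  conv_lhs => rw [mul_mul_mul_comm]
  conv_rhs => rw [mul_mul_mul_comm]
  congr 1
  · rw [← mul_inv, ← mul_inv, ← Real.sqrt_mul (by positivity), ← Real.sqrt_mul (by positivity)]
    congr 2
    field_simp
  · rw [← Real.exp_add, ← Real.exp_add]
    congr 1
    rw [sub_zero]
    field_simp
    ring

lemma stdGaussianCDF_measurable : Measurable stdGaussianCDF := by
  refine Monotone.measurable fun u u' h => ?_
  exact ENNReal.toReal_mono (measure_ne_top _ _)
    (measure_mono (Set.Iic_subset_Iic.mpr h))

lemma g_arg (μ σ σn t v : ℝ) (hσ : 0 < σ) (hσn : 0 < σn) :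
    (t - (σn^2 * μ + σ^2 * v) / (σ^2 + σn^2)) / Real.sqrt (σ^2 * σn^2 / (σ^2 + σn^2))
      = ((σ^2 + σn^2) * t - σn^2 * μ - σ^2 * v) / (σ * σn * Real.sqrt (σ^2 + σn^2)) := by
  have hab : (0:ℝ) < σ^2 + σn^2 := by positivity
  set u : ℝ := Real.sqrt (σ^2 + σn^2) with hu
  have hu0 : 0 < u := Real.sqrt_pos.mpr hab
  have hu2 : u^2 = σ^2 + σn^2 := Real.sq_sqrt hab.le
  have h1 : Real.sqrt (σ^2 * σn^2 / (σ^2 + σn^2)) = σ * σn / u := by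
    rw [show σ^2 * σn^2 / (σ^2 + σn^2) = (σ * σn / u)^2 by
      rw [div_pow, mul_pow, hu2], Real.sqrt_sq (by positivity)]
  rw [h1, show t - (σn^2 * μ + σ^2 * v) / (σ^2 + σn^2)
      = ((σ^2 + σn^2) * t - σn^2 * μ - σ^2 * v) / (σ^2 + σn^2) by field_simp; ring, ← hu2]
  field_simp

/-- The correct observation model given `{f ≤ t}`. For independent
`f ~ N(μ, σ²)` and `ε ~ N(0, σ_n²)` and `y = f + ε`, the conditional law of `y` given
the event `{f ≤ t}` is absolutely continuous w.r.t. Lebesgue measure with density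
`v ↦ Φ(g(v, t)) · pdf(μ, σ² + σ_n²)(v) / Φ((t - μ)/σ)`, where
`g(v, c) = ((σ² + σ_n²)c - σ_n²μ - σ²v)/(σ σ_n √(σ² + σ_n²))`. -/
theorem cond_law_noisy_obs_given_sublevel {Ω : Type*} [MeasurableSpace Ω]
    (P : Measure Ω) [IsProbabilityMeasure P]
    (f ε : Ω → ℝ) (hf : Measurable f) (hε : Measurable ε)
    (hindep : IndepFun f ε P) (μ σ σn : ℝ) (hσ : 0 < σ) (hσn : 0 < σn)
    (hfl : P.map f = gaussianReal μ (Real.toNNReal (σ ^ 2)))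
    (hεl : P.map ε = gaussianReal 0 (Real.toNNReal (σn ^ 2)))
    (t : ℝ) :
    Measure.map (f + ε) (ProbabilityTheory.cond P {ω | f ω ≤ t}) ≪
        (volume : Measure ℝ) ∧
      Measure.map (f + ε) (ProbabilityTheory.cond P {ω | f ω ≤ t}) =
        (volume : Measure ℝ).withDensity (fun v => ENNReal.ofReal
          (stdGaussianCDF (((σ ^ 2 + σn ^ 2) * t - σn ^ 2 * μ - σ ^ 2 * v) /
              (σ * σn * Real.sqrt (σ ^ 2 + σn ^ 2))) *
            gaussianPDFReal μ (Real.toNNReal (σ ^ 2 + σn ^ 2)) v /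
            stdGaussianCDF ((t - μ) / σ))) := by
  have ha : (0:ℝ) < σ ^ 2 := by positivity
  have hb : (0:ℝ) < σn ^ 2 := by positivity
  have hab : (0:ℝ) < σ ^ 2 + σn ^ 2 := by positivity
  have hane : Real.toNNReal (σ ^ 2) ≠ 0 := by
    simp only [ne_eq, Real.toNNReal_eq_zero, not_le]; positivity
  have hbne : Real.toNNReal (σn ^ 2) ≠ 0 := by
    simp only [ne_eq, Real.toNNReal_eq_zero, not_le]; positivity
  -- the conditional variance
  set V : ℝ := σ ^ 2 * σn ^ 2 / (σ ^ 2 + σn ^ 2) with hV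
  have hV0 : 0 < V := by positivity
  have hVne : Real.toNNReal V ≠ 0 := by
    simp only [ne_eq, Real.toNNReal_eq_zero, not_le]; positivity
  -- G and the pre-division density
  set G : ℝ → ℝ := fun v => ((σ ^ 2 + σn ^ 2) * t - σn ^ 2 * μ - σ ^ 2 * v) /
      (σ * σn * Real.sqrt (σ ^ 2 + σn ^ 2)) with hG
  set D : ℝ → ENNReal := fun v => ENNReal.ofReal
      (stdGaussianCDF (G v) * gaussianPDFReal μ (Real.toNNReal (σ ^ 2 + σn ^ 2)) v) with hD
  have hGmeas : Measurable G := by fun_prop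
  have hDmeas : Measurable D := by
    exact ((stdGaussianCDF_measurable.comp hGmeas).mul
      (measurable_gaussianPDFReal _ _)).ennreal_ofReal
  have hA : MeasurableSet {ω | f ω ≤ t} := hf measurableSet_Iic
  have hPA : P {ω | f ω ≤ t} = ENNReal.ofReal (stdGaussianCDF ((t - μ) / σ)) := by
    have h0 : {ω | f ω ≤ t} = f ⁻¹' Set.Iic t := rfl
    rw [h0, ← Measure.map_apply hf measurableSet_Iic, hfl, gaussianReal_Iic μ _ ha,
      Real.sqrt_sq hσ.le]
  have hΦc := stdGaussianCDF_pos ((t - μ) / σ)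
  have hjoint : P.map (fun ω => (f ω, ε ω)) =
      (gaussianReal μ (Real.toNNReal (σ ^ 2))).prod (gaussianReal 0 (Real.toNNReal (σn ^ 2))) := by
    rw [← hfl, ← hεl]
    exact (indepFun_iff_map_prod_eq_prod_map_map hf.aemeasurable hε.aemeasurable).mp hindep
  -- main computation
  have hmap : (P.restrict {ω | f ω ≤ t}).map (f + ε) = volume.withDensity D := by
    have hfε : Measurable (f + ε) := hf.add hε
    ext s hs
    rw [Measure.map_apply hfε hs, Measure.restrict_apply (hfε hs)]
    set T : Set (ℝ × ℝ) := ((fun p : ℝ × ℝ => p.1 + p.2) ⁻¹' s) ∩ (Prod.fst ⁻¹' Set.Iic t)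
      with hTdef
    have hT : MeasurableSet T :=
      (hs.preimage (measurable_fst.add measurable_snd)).inter
        (measurableSet_Iic.preimage measurable_fst)
    have hTset : (f + ε) ⁻¹' s ∩ {ω | f ω ≤ t} = (fun ω => (f ω, ε ω)) ⁻¹' T := by
      ext ω; simp [hTdef, Pi.add_apply]
    rw [hTset, ← Measure.map_apply (hf.prodMk hε) hT, hjoint, Measure.prod_apply hT]
    have hsec : (fun x => gaussianReal 0 (Real.toNNReal (σn ^ 2)) (Prod.mk x ⁻¹' T))
        = fun x => Set.indicator (Set.Iic t)
            (fun x => ∫⁻ v in s, ENNReal.ofReal (gaussianPDFReal 0 (Real.toNNReal (σn ^ 2)) (v - x))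
              ∂volume) x := by
      funext x
      by_cases hx : x ≤ t
      · rw [Set.indicator_of_mem (Set.mem_Iic.mpr hx)]
        have hpre : Prod.mk x ⁻¹' T = (fun e => x + e) ⁻¹' s := by
          ext e; simp [hTdef, hx]
        rw [hpre, ← Measure.map_apply (measurable_const_add x) hs,
          gaussianReal_map_const_add, zero_add, gaussianReal_apply _ hbne s]
        refine setLIntegral_congr_fun hs (fun v _ => ?_)
        rw [gaussianPDF, gaussianPDFReal_sub, zero_add]
      · rw [Set.indicator_of_notMem (by simpa using hx)]
        have hpre : Prod.mk x ⁻¹' T = ∅ := by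
          ext e; simp [hTdef, hx]
        rw [hpre, measure_empty]
    rw [hsec, lintegral_indicator measurableSet_Iic _,
      gaussianReal_of_var_ne_zero μ hane, restrict_withDensity measurableSet_Iic,
      lintegral_withDensity_eq_lintegral_mul _ (measurable_gaussianPDF _ _) ?hinner]
    case hinner =>
      exact Measurable.lintegral_prod_right
        (((measurable_gaussianPDFReal 0 _).comp (measurable_snd.sub measurable_fst)).ennreal_ofReal)
    have hswap : ∫⁻ x in Set.Iic t, (gaussianPDF μ (Real.toNNReal (σ ^ 2)) * fun x =>
          ∫⁻ v in s, ENNReal.ofReal (gaussianPDFReal 0 (Real.toNNReal (σn ^ 2)) (v - x)) ∂volume) x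
          ∂volume
        = ∫⁻ v in s, ∫⁻ x in Set.Iic t, ENNReal.ofReal
            (gaussianPDFReal μ (Real.toNNReal (σ ^ 2)) x *
             gaussianPDFReal 0 (Real.toNNReal (σn ^ 2)) (v - x)) ∂volume ∂volume := by
      have h1 : ∀ x, (gaussianPDF μ (Real.toNNReal (σ ^ 2)) * fun x =>
          ∫⁻ v in s, ENNReal.ofReal (gaussianPDFReal 0 (Real.toNNReal (σn ^ 2)) (v - x)) ∂volume) x
          = ∫⁻ v in s, ENNReal.ofReal
            (gaussianPDFReal μ (Real.toNNReal (σ ^ 2)) x *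
             gaussianPDFReal 0 (Real.toNNReal (σn ^ 2)) (v - x)) ∂volume := by
        intro x
        have hm : Measurable (fun v : ℝ =>
            ENNReal.ofReal (gaussianPDFReal 0 (Real.toNNReal (σn ^ 2)) (v - x))) :=
          ((measurable_gaussianPDFReal 0 _).comp (measurable_id.sub measurable_const)).ennreal_ofReal
        simp only [Pi.mul_apply, gaussianPDF]
        rw [← lintegral_const_mul _ hm]
        refine lintegral_congr fun v => ?_
        rw [ENNReal.ofReal_mul (gaussianPDFReal_nonneg _ _ _)]
      simp only [h1]
      refine lintegral_lintegral_swap ?_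
      exact ((((measurable_gaussianPDFReal μ _).comp measurable_fst).mul
        ((measurable_gaussianPDFReal 0 _).comp (measurable_snd.sub measurable_fst))).ennreal_ofReal).aemeasurable
    rw [hswap, withDensity_apply _ hs]
    refine setLIntegral_congr_fun hs (fun v _ => ?_)
    -- inner integral over x
    have hconv : ∀ x, gaussianPDFReal μ (Real.toNNReal (σ ^ 2)) x *
          gaussianPDFReal 0 (Real.toNNReal (σn ^ 2)) (v - x)
        = gaussianPDFReal μ (Real.toNNReal (σ ^ 2 + σn ^ 2)) v *
          gaussianPDFReal ((σn ^ 2 * μ + σ ^ 2 * v) / (σ ^ 2 + σn ^ 2)) (Real.toNNReal V) x :=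
      fun x => gaussianPDFReal_conv μ (σ ^ 2) (σn ^ 2) ha hb v x
    simp only [hconv]
    calc ∫⁻ x in Set.Iic t, ENNReal.ofReal
          (gaussianPDFReal μ (Real.toNNReal (σ ^ 2 + σn ^ 2)) v *
           gaussianPDFReal ((σn ^ 2 * μ + σ ^ 2 * v) / (σ ^ 2 + σn ^ 2)) (Real.toNNReal V) x)
          ∂volume
        = ENNReal.ofReal (gaussianPDFReal μ (Real.toNNReal (σ ^ 2 + σn ^ 2)) v) *
          ∫⁻ x in Set.Iic t,
            gaussianPDF ((σn ^ 2 * μ + σ ^ 2 * v) / (σ ^ 2 + σn ^ 2)) (Real.toNNReal V) x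
            ∂volume := by
          rw [← lintegral_const_mul _ (measurable_gaussianPDF _ _)]
          refine lintegral_congr fun x => ?_
          rw [gaussianPDF, ← ENNReal.ofReal_mul (gaussianPDFReal_nonneg _ _ _)]
      _ = ENNReal.ofReal (gaussianPDFReal μ (Real.toNNReal (σ ^ 2 + σn ^ 2)) v) *
          ENNReal.ofReal (stdGaussianCDF (G v)) := by
          rw [← gaussianReal_apply _ hVne, gaussianReal_Iic _ _ hV0, hV,
            g_arg μ σ σn t v hσ hσn]
      _ = D v := by
          rw [hD, ← ENNReal.ofReal_mul (gaussianPDFReal_nonneg _ _ _), mul_comm]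
  -- assemble
  have hcond : ProbabilityTheory.cond P {ω | f ω ≤ t}
      = (P {ω | f ω ≤ t})⁻¹ • P.restrict {ω | f ω ≤ t} := rfl
  have heq : Measure.map (f + ε) (ProbabilityTheory.cond P {ω | f ω ≤ t}) =
      (volume : Measure ℝ).withDensity (fun v => ENNReal.ofReal
        (stdGaussianCDF (G v) * gaussianPDFReal μ (Real.toNNReal (σ ^ 2 + σn ^ 2)) v /
          stdGaussianCDF ((t - μ) / σ))) := by
    rw [hcond, Measure.map_smul, hmap, hPA,
      ← withDensity_smul _ hDmeas]
    congr 1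
    funext v
    simp only [Pi.smul_apply, smul_eq_mul, hD]
    rw [ENNReal.ofReal_div_of_pos hΦc, ENNReal.div_eq_inv_mul]
  exact ⟨heq ▸ withDensity_absolutelyContinuous _ _, heq⟩
end

section
/- On a probability space, let f and ε be independent real-valued random variables with f distributed as the Gaussian measure with mean μ and variance σ² (σ > 0) and ε distributed as the Gaussian with mean 0 and variance σ_n² (σ_n > 0), let y = f + ε, and fix real thresholds b ≤ b'. Then for almost every v with respect to the law of y, the conditional probability that b ≤ f < b' given y = v equals Φ(g(v, b')) − Φ(g(v, b)), where g(v, c) = ((σ² + σ_n²)·c − σ_n²·μ − σ²·v)/(σ·σ_n·√(σ² + σ_n²)). -/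
open scoped NNReal ENNReal


open MeasureTheory ProbabilityTheory Real

lemma gaussianPDFReal_bayes (μ σ σn : ℝ) (hσ : 0 < σ) (hσn : 0 < σn) (v x : ℝ) :
    gaussianPDFReal μ (Real.toNNReal (σ ^ 2)) x *
      gaussianPDFReal x (Real.toNNReal (σn ^ 2)) v =
    gaussianPDFReal μ (Real.toNNReal (σ ^ 2 + σn ^ 2)) v *
      gaussianPDFReal ((σn ^ 2 * μ + σ ^ 2 * v) / (σ ^ 2 + σn ^ 2))
        (Real.toNNReal (σ ^ 2 * σn ^ 2 / (σ ^ 2 + σn ^ 2))) x := by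
  have ha : (0:ℝ) < σ ^ 2 := by positivity
  have hn : (0:ℝ) < σn ^ 2 := by positivity
  have ht : (0:ℝ) < σ ^ 2 + σn ^ 2 := by positivity
  have hτ : (0:ℝ) < σ ^ 2 * σn ^ 2 / (σ ^ 2 + σn ^ 2) := by positivity
  simp only [gaussianPDFReal, Real.coe_toNNReal _ ha.le, Real.coe_toNNReal _ hn.le,
    Real.coe_toNNReal _ ht.le, Real.coe_toNNReal _ hτ.le]
  rw [show ((√(2 * π * σ ^ 2))⁻¹ * rexp (-(x - μ) ^ 2 / (2 * σ ^ 2))) *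
      ((√(2 * π * σn ^ 2))⁻¹ * rexp (-(v - x) ^ 2 / (2 * σn ^ 2)))
      = (√(2 * π * σ ^ 2) * √(2 * π * σn ^ 2))⁻¹ *
        (rexp (-(x - μ) ^ 2 / (2 * σ ^ 2)) * rexp (-(v - x) ^ 2 / (2 * σn ^ 2))) by
    rw [mul_inv]; ring]
  rw [show ((√(2 * π * (σ ^ 2 + σn ^ 2)))⁻¹ * rexp (-(v - μ) ^ 2 / (2 * (σ ^ 2 + σn ^ 2)))) *
      ((√(2 * π * (σ ^ 2 * σn ^ 2 / (σ ^ 2 + σn ^ 2))))⁻¹ *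
        rexp (-(x - (σn ^ 2 * μ + σ ^ 2 * v) / (σ ^ 2 + σn ^ 2)) ^ 2 /
          (2 * (σ ^ 2 * σn ^ 2 / (σ ^ 2 + σn ^ 2)))))
      = (√(2 * π * (σ ^ 2 + σn ^ 2)) * √(2 * π * (σ ^ 2 * σn ^ 2 / (σ ^ 2 + σn ^ 2))))⁻¹ *
        (rexp (-(v - μ) ^ 2 / (2 * (σ ^ 2 + σn ^ 2))) *
          rexp (-(x - (σn ^ 2 * μ + σ ^ 2 * v) / (σ ^ 2 + σn ^ 2)) ^ 2 /
            (2 * (σ ^ 2 * σn ^ 2 / (σ ^ 2 + σn ^ 2))))) by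
    rw [mul_inv]; ring]
  have hpre : √(2 * π * σ ^ 2) * √(2 * π * σn ^ 2)
      = √(2 * π * (σ ^ 2 + σn ^ 2)) * √(2 * π * (σ ^ 2 * σn ^ 2 / (σ ^ 2 + σn ^ 2))) := by
    rw [← Real.sqrt_mul (by positivity), ← Real.sqrt_mul (by positivity)]
    congr 1
    field_simp
  rw [hpre, ← Real.exp_add, ← Real.exp_add]
  congr 1
  congr 1
  field_simp
  ring

lemma continuous_gaussianPDFReal_prod (n : ℝ≥0) :
    Continuous fun p : ℝ × ℝ => gaussianPDFReal p.1 n p.2 := by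
  unfold gaussianPDFReal
  fun_prop

lemma measurable_gaussianPDF_prod (n : ℝ≥0) :
    Measurable fun p : ℝ × ℝ => gaussianPDF p.1 n p.2 := by
  unfold gaussianPDF
  exact ENNReal.measurable_ofReal.comp (continuous_gaussianPDFReal_prod n).measurable

lemma measurable_gaussianReal_mean_s14 (c : ℝ≥0) :
    Measurable fun m : ℝ => gaussianReal m c := by
  by_cases hc : c = 0
  · subst hc
    simp only [gaussianReal_zero_var]
    exact Measure.measurable_dirac
  · refine Measure.measurable_of_measurable_coe _ fun s hs => ?_
    simp_rw [gaussianReal_apply _ hc s, ← lintegral_indicator hs _]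
    have : ∀ m : ℝ, (∫⁻ x, s.indicator (gaussianPDF m c) x)
        = ∫⁻ x, s.indicator (fun _ => (1:ℝ≥0∞)) x * gaussianPDF m c x := by
      intro m; congr 1; ext x
      by_cases hx : x ∈ s <;> simp [hx]
    simp_rw [this]
    exact Measurable.lintegral_prod_right <|
      (((measurable_indicator_const_iff 1).mpr hs).comp measurable_snd).mul
        (measurable_gaussianPDF_prod c)

noncomputable def postKer (μ σ σn : ℝ) : Kernel ℝ ℝ :=
  ⟨fun v => gaussianReal ((σn ^ 2 * μ + σ ^ 2 * v) / (σ ^ 2 + σn ^ 2))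
      (Real.toNNReal (σ ^ 2 * σn ^ 2 / (σ ^ 2 + σn ^ 2))),
    (measurable_gaussianReal_mean_s14 _).comp
      (((measurable_id.const_mul (σ ^ 2)).const_add (σn ^ 2 * μ)).div_const _)⟩

instance (μ σ σn : ℝ) : IsMarkovKernel (postKer μ σ σn) :=
  ⟨fun v => by
    have : postKer μ σ σn v = gaussianReal ((σn ^ 2 * μ + σ ^ 2 * v) / (σ ^ 2 + σn ^ 2))
        (Real.toNNReal (σ ^ 2 * σn ^ 2 / (σ ^ 2 + σn ^ 2))) := rfl
    rw [this]; infer_instance⟩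

lemma joint_eq_compProd (μ σ σn : ℝ) (hσ : 0 < σ) (hσn : 0 < σn) :
    ((gaussianReal μ (Real.toNNReal (σ ^ 2))).prod
        (gaussianReal 0 (Real.toNNReal (σn ^ 2)))).map (fun p => (p.1 + p.2, p.1)) =
      (gaussianReal μ (Real.toNNReal (σ ^ 2 + σn ^ 2))) ⊗ₘ postKer μ σ σn := by
  have ha : Real.toNNReal (σ ^ 2) ≠ 0 := by
    simp [Real.toNNReal_eq_zero, not_le]; positivity
  have hn : Real.toNNReal (σn ^ 2) ≠ 0 := by
    simp [Real.toNNReal_eq_zero, not_le]; positivity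
  have ht : Real.toNNReal (σ ^ 2 + σn ^ 2) ≠ 0 := by
    simp [Real.toNNReal_eq_zero, not_le]; positivity
  have hτ : Real.toNNReal (σ ^ 2 * σn ^ 2 / (σ ^ 2 + σn ^ 2)) ≠ 0 := by
    simp [Real.toNNReal_eq_zero, not_le]; positivity
  ext s hs
  have hind : Measurable fun q : ℝ × ℝ => s.indicator (fun _ => (1:ℝ≥0∞)) q :=
    (measurable_indicator_const_iff 1).mpr hs
  -- LHS
  rw [Measure.map_apply (by fun_prop) hs, Measure.prod_apply (hs.preimage (by fun_prop))]
  have hinner : ∀ x : ℝ,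
      gaussianReal 0 (Real.toNNReal (σn ^ 2))
          (Prod.mk x ⁻¹' ((fun p : ℝ × ℝ => (p.1 + p.2, p.1)) ⁻¹' s)) =
        ∫⁻ v, gaussianPDF x (Real.toNNReal (σn ^ 2)) v
          * s.indicator (fun _ => (1:ℝ≥0∞)) (v, x) := by
    intro x
    have hmx : MeasurableSet ((fun v : ℝ => (v, x)) ⁻¹' s) := hs.preimage (by fun_prop)
    have h1 : Prod.mk x ⁻¹' ((fun p : ℝ × ℝ => (p.1 + p.2, p.1)) ⁻¹' s)
        = (· + x) ⁻¹' ((fun v : ℝ => (v, x)) ⁻¹' s) := by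
      ext e; simp [add_comm]
    rw [h1, ← Measure.map_apply (measurable_add_const x) hmx, gaussianReal_map_add_const,
      zero_add, gaussianReal_apply _ hn, ← lintegral_indicator hmx]
    congr 1; ext v
    by_cases hv : (v, x) ∈ s <;> simp [Set.indicator, hv]
  simp_rw [hinner]
  rw [gaussianReal_of_var_ne_zero μ ha,
    lintegral_withDensity_eq_lintegral_mul _ (measurable_gaussianPDF _ _)
      (Measurable.lintegral_prod_right
        (((measurable_gaussianPDF_prod _).mul (hind.comp measurable_swap))))]
  -- RHS
  rw [Measure.compProd_apply hs]
  have hinner2 : ∀ v : ℝ,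
      postKer μ σ σn v (Prod.mk v ⁻¹' s) =
        ∫⁻ x, gaussianPDF ((σn ^ 2 * μ + σ ^ 2 * v) / (σ ^ 2 + σn ^ 2))
            (Real.toNNReal (σ ^ 2 * σn ^ 2 / (σ ^ 2 + σn ^ 2))) x
          * s.indicator (fun _ => (1:ℝ≥0∞)) (v, x) := by
    intro v
    have hmv : MeasurableSet (Prod.mk v ⁻¹' s) := hs.preimage (by fun_prop)
    have hpk : postKer μ σ σn v = gaussianReal ((σn ^ 2 * μ + σ ^ 2 * v) / (σ ^ 2 + σn ^ 2))
        (Real.toNNReal (σ ^ 2 * σn ^ 2 / (σ ^ 2 + σn ^ 2))) := rfl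
    rw [hpk]
    rw [gaussianReal_apply _ hτ, ← lintegral_indicator hmv]
    congr 1; ext x
    by_cases hx : (v, x) ∈ s <;> simp [Set.indicator, hx]
  simp_rw [hinner2]
  rw [gaussianReal_of_var_ne_zero μ ht,
    lintegral_withDensity_eq_lintegral_mul _ (measurable_gaussianPDF _ _)
      (Measurable.lintegral_prod_right
        ((((measurable_gaussianPDF_prod _).comp
            ((measurable_fst.const_mul (σ ^ 2)|>.const_add (σn ^ 2 * μ)|>.div_const _).prodMk
              measurable_snd)).mul hind)))]
  -- now both sides are double lintegrals over volume; swap and compare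
  simp only [Pi.mul_apply]
  have hnt : ∀ m (c : ℝ≥0) x, gaussianPDF m c x ≠ ∞ := fun _ _ _ => ENNReal.ofReal_ne_top
  simp_rw [← lintegral_const_mul' _ _ (hnt _ _ _)]
  rw [lintegral_lintegral_swap]
  · refine lintegral_congr fun v => lintegral_congr fun x => ?_
    by_cases hvx : (v, x) ∈ s
    · simp only [Set.indicator_of_mem hvx, mul_one]
      rw [gaussianPDF, gaussianPDF, gaussianPDF, gaussianPDF,
        ← ENNReal.ofReal_mul (gaussianPDFReal_nonneg _ _ _),
        ← ENNReal.ofReal_mul (gaussianPDFReal_nonneg _ _ _)]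
      exact congrArg _ (gaussianPDFReal_bayes μ σ σn hσ hσn v x)
    · simp [Set.indicator_of_notMem hvx]
  · apply Measurable.aemeasurable
    exact ((measurable_gaussianPDF_prod _).comp
        (measurable_const.prodMk measurable_fst)).mul
      ((measurable_gaussianPDF_prod _).mul (hind.comp measurable_swap))


lemma gaussianReal_singleton (u : ℝ) : gaussianReal 0 1 {u} = 0 :=
  gaussianReal_absolutelyContinuous 0 one_ne_zero (by simp)

lemma gaussianReal_Iio_s14 (x : ℝ) : gaussianReal 0 1 (Set.Iio x) = gaussianReal 0 1 (Set.Iic x) := by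
  refine le_antisymm (measure_mono Set.Iio_subset_Iic_self) ?_
  calc gaussianReal 0 1 (Set.Iic x) = gaussianReal 0 1 (Set.Iio x ∪ {x}) := by
        rw [Set.Iio_union_right]
    _ ≤ gaussianReal 0 1 (Set.Iio x) + gaussianReal 0 1 {x} := measure_union_le _ _
    _ = gaussianReal 0 1 (Set.Iio x) := by rw [gaussianReal_singleton, add_zero]

lemma gaussianReal_Ico_toReal (m : ℝ) (c : ℝ≥0) (hc : c ≠ 0) (b b' : ℝ) (hb : b ≤ b') :
    (gaussianReal m c (Set.Ico b b')).toReal =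
      stdGaussianCDF ((b' - m) / Real.sqrt c) - stdGaussianCDF ((b - m) / Real.sqrt c) := by
  have hcpos : (0:ℝ) < Real.sqrt c := Real.sqrt_pos.mpr (by exact_mod_cast hc.bot_lt)
  have hmap : gaussianReal m c = (gaussianReal 0 1).map (fun x => Real.sqrt c * x + m) := by
    have h1 : (gaussianReal 0 1).map (fun x => Real.sqrt c * x) = gaussianReal 0 c := by
      rw [show (fun x : ℝ => Real.sqrt c * x) = (Real.sqrt c * ·) by rfl,
        gaussianReal_map_const_mul]
      congr 1
      · ring
      · ext
        simp [Real.sq_sqrt c.coe_nonneg]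
    have h2 : ((gaussianReal 0 1).map (fun x => Real.sqrt c * x)).map (· + m)
        = gaussianReal m c := by rw [h1, gaussianReal_map_add_const, zero_add]
    rw [← h2, Measure.map_map (measurable_add_const m) (measurable_const_mul _)]
    rfl
  have hpre : (fun x => Real.sqrt c * x + m) ⁻¹' Set.Ico b b'
      = Set.Ico ((b - m) / Real.sqrt c) ((b' - m) / Real.sqrt c) := by
    ext z
    simp only [Set.mem_preimage, Set.mem_Ico, div_le_iff₀ hcpos, lt_div_iff₀ hcpos]
    constructor <;> rintro ⟨h1, h2⟩ <;> constructor <;> nlinarith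
  rw [hmap, Measure.map_apply (by fun_prop) measurableSet_Ico, hpre]
  set l := (b - m) / Real.sqrt c
  set u := (b' - m) / Real.sqrt c
  have hlu : l ≤ u := by
    have h : b - m ≤ b' - m := by linarith
    exact div_le_div_of_nonneg_right h hcpos.le
  have hdiff : Set.Ico l u = Set.Iio u \ Set.Iio l := by
    ext z; simp only [Set.mem_Ico, Set.mem_diff, Set.mem_Iio, not_lt]; tauto
  have hsub : Set.Iio l ⊆ Set.Iio u := fun z hz => lt_of_lt_of_le hz hlu
  rw [hdiff, measure_diff hsub measurableSet_Iio.nullMeasurableSet (measure_ne_top _ _),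
    ENNReal.toReal_sub_of_le (measure_mono hsub) (measure_ne_top _ _),
    gaussianReal_Iio_s14, gaussianReal_Iio_s14]
  rfl



/-- Multi-class (BES^k) posterior class probability. For independent
`f ~ N(μ, σ²)` and `ε ~ N(0, σ_n²)`, `y = f + ε` and thresholds `b ≤ b'`, for almost
every `v` w.r.t. the law of `y`, the conditional probability that `b ≤ f < b'` given
`y = v` equals `Φ(g(v, b')) - Φ(g(v, b))`, where
`g(v, c) = ((σ² + σ_n²)c - σ_n²μ - σ²v)/(σ σ_n √(σ² + σ_n²))`. -/
theorem condProb_band_given_noisy_obs {Ω : Type*} [MeasurableSpace Ω]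
    (P : Measure Ω) [IsProbabilityMeasure P]
    (f ε : Ω → ℝ) (hf : Measurable f) (hε : Measurable ε)
    (hindep : IndepFun f ε P) (μ σ σn : ℝ) (hσ : 0 < σ) (hσn : 0 < σn)
    (hfl : P.map f = gaussianReal μ (Real.toNNReal (σ ^ 2)))
    (hεl : P.map ε = gaussianReal 0 (Real.toNNReal (σn ^ 2)))
    (b b' : ℝ) (hb : b ≤ b') :
    ∀ᵐ v ∂(P.map (f + ε)),
      (condDistrib f (f + ε) P v (Set.Ico b b')).toReal =
        stdGaussianCDF (((σ ^ 2 + σn ^ 2) * b' - σn ^ 2 * μ - σ ^ 2 * v) /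
            (σ * σn * Real.sqrt (σ ^ 2 + σn ^ 2))) -
          stdGaussianCDF (((σ ^ 2 + σn ^ 2) * b - σn ^ 2 * μ - σ ^ 2 * v) /
            (σ * σn * Real.sqrt (σ ^ 2 + σn ^ 2))) := by
  have ht : (0:ℝ) < σ ^ 2 + σn ^ 2 := by positivity
  have hτ : (0:ℝ) < σ ^ 2 * σn ^ 2 / (σ ^ 2 + σn ^ 2) := by positivity
  have hy : Measurable (f + ε) := hf.add hε
  -- joint law
  have hpair : P.map (fun ω => (f ω, ε ω)) = (P.map f).prod (P.map ε) :=
    (indepFun_iff_map_prod_eq_prod_map_map hf.aemeasurable hε.aemeasurable).mp hindep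
  have hjoint : P.map (fun ω => ((f + ε) ω, f ω)) =
      gaussianReal μ (Real.toNNReal (σ ^ 2 + σn ^ 2)) ⊗ₘ postKer μ σ σn := by
    rw [← joint_eq_compProd μ σ σn hσ hσn, ← hfl, ← hεl, ← hpair,
      Measure.map_map (by fun_prop) (hf.prodMk hε)]
    rfl
  -- law of y
  have hylaw : P.map (f + ε) = gaussianReal μ (Real.toNNReal (σ ^ 2 + σn ^ 2)) := by
    have h1 : (P.map (fun ω => ((f + ε) ω, f ω))).fst = P.map (f + ε) := by
      rw [Measure.fst, Measure.map_map measurable_fst (hy.prodMk hf)]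
      rfl
    rw [← h1, hjoint, Measure.fst_compProd]
  -- identify condDistrib
  have hcd : ∀ᵐ v ∂(P.map (f + ε)), postKer μ σ σn v = condDistrib f (f + ε) P v := by
    refine (condDistrib_ae_eq_of_measure_eq_compProd_of_measurable hy hf (κ := postKer μ σ σn) ?_).mono
      fun v hv => hv.symm
    rw [hjoint, hylaw]
  filter_upwards [hcd] with v hv
  rw [← hv]
  have hpk : postKer μ σ σn v = gaussianReal ((σn ^ 2 * μ + σ ^ 2 * v) / (σ ^ 2 + σn ^ 2))
      (Real.toNNReal (σ ^ 2 * σn ^ 2 / (σ ^ 2 + σn ^ 2))) := rfl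
  have hτne : Real.toNNReal (σ ^ 2 * σn ^ 2 / (σ ^ 2 + σn ^ 2)) ≠ 0 := by
    simp [Real.toNNReal_eq_zero, not_le]; positivity
  rw [hpk, gaussianReal_Ico_toReal _ _ hτne b b' hb]
  have hstne : Real.sqrt (σ ^ 2 + σn ^ 2) ≠ 0 := by positivity
  have hst : Real.sqrt (σ ^ 2 + σn ^ 2) * Real.sqrt (σ ^ 2 + σn ^ 2) = σ ^ 2 + σn ^ 2 :=
    Real.mul_self_sqrt ht.le
  have hsqτ : Real.sqrt ((Real.toNNReal (σ ^ 2 * σn ^ 2 / (σ ^ 2 + σn ^ 2)) : ℝ))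
      = σ * σn / Real.sqrt (σ ^ 2 + σn ^ 2) := by
    rw [Real.coe_toNNReal _ hτ.le,
      show σ ^ 2 * σn ^ 2 / (σ ^ 2 + σn ^ 2) = (σ * σn / Real.sqrt (σ ^ 2 + σn ^ 2)) ^ 2 by
        field_simp
        nlinarith [hst]]
    exact Real.sqrt_sq (by positivity)
  rw [hsqτ]
  have harg : ∀ c : ℝ, (c - (σn ^ 2 * μ + σ ^ 2 * v) / (σ ^ 2 + σn ^ 2)) /
      (σ * σn / Real.sqrt (σ ^ 2 + σn ^ 2))
      = ((σ ^ 2 + σn ^ 2) * c - σn ^ 2 * μ - σ ^ 2 * v) /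
        (σ * σn * Real.sqrt (σ ^ 2 + σn ^ 2)) := by
    intro c
    have hsq : Real.sqrt (σ ^ 2 + σn ^ 2) ^ 2 = σ ^ 2 + σn ^ 2 := Real.sq_sqrt ht.le
    field_simp
    rw [hsq]; ring
  rw [harg, harg]
end
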